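/- arXiv:1511.00796 — 2 statements merged into one kernel-verified Lean document; each statement's English description precedes it below -/
import Mathlib

section
/- Let γ : ℝ → ℝ³ be a twice continuously differentiable curve and u : ℝ → ℝ³ a continuous map such that γ̈(t) = -‖γ̇(t)‖² γ(t) + u(t) and ⟨u(t), γ(t)⟩ = 0 for all t. If ‖γ(0)‖ = 1 and ⟨γ(0), γ̇(0)⟩ = 0, then ‖γ(t)‖ = 1 for all t ∈ ℝ, i.e. the controlled spherical pendulum trajectory remains on the unit sphere S². -/
/-!
Along the motion, the pair `(‖γ‖² - 1, ⟪γ, γ̇⟫)` satisfies the linear system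
`x' = 2 y`, `y' = -‖γ̇‖² x`: differentiating `⟪γ, γ̇⟫` gives `‖γ̇‖² + ⟪γ, γ̈⟫`, and the equation of
motion together with `⟪u, γ⟫ = 0` turns this into `‖γ̇‖² (1 - ‖γ‖²)`. The pair vanishes at `t = 0`,
so by Grönwall's inequality (applied forwards and backwards in time) it vanishes identically.
-/

open RealInnerProductSpace Set

section LinearGronwall

variable {E : Type*} [NormedAddCommGroup E] [NormedSpace ℝ E] {f f' : ℝ → E} {c : ℝ → ℝ}

theorem eq_zero_of_norm_deriv_le_mul_norm_of_le (hc : Continuous c)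
    (hf : ∀ t, HasDerivAt f (f' t) t) (bound : ∀ t, ‖f' t‖ ≤ c t * ‖f t‖) {a b : ℝ}
    (ha : f a = 0) (hab : a ≤ b) : f b = 0 := by
  obtain ⟨K, hK⟩ := isCompact_Icc.exists_bound_of_continuousOn (hc.continuousOn (s := Icc a b))
  refine eq_zero_of_abs_deriv_le_mul_abs_self_of_eq_zero_right (K := K)
    (fun t _ => (hf t).continuousAt.continuousWithinAt) (fun t _ => (hf t).hasDerivWithinAt) ha
    (fun t ht => ?_) b ⟨hab, le_rfl⟩
  calc ‖f' t‖ ≤ c t * ‖f t‖ := bound t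
    _ ≤ K * ‖f t‖ := by
      gcongr
      exact (le_abs_self _).trans (hK t (Ico_subset_Icc_self ht))

theorem eq_zero_of_norm_deriv_le_mul_norm (hc : Continuous c)
    (hf : ∀ t, HasDerivAt f (f' t) t) (bound : ∀ t, ‖f' t‖ ≤ c t * ‖f t‖) {a : ℝ}
    (ha : f a = 0) (t : ℝ) : f t = 0 := by
  rcases le_total a t with hat | hta
  · exact eq_zero_of_norm_deriv_le_mul_norm_of_le hc hf bound ha hat
  · have hf_neg (s : ℝ) : HasDerivAt (fun s => f (-s)) (-f' (-s)) s := by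
      simpa [Function.comp_def] using (hf (-s)).scomp s (hasDerivAt_neg s)
    simpa using eq_zero_of_norm_deriv_le_mul_norm_of_le (hc.comp continuous_neg) hf_neg
      (fun s => by simpa using bound (-s)) (by simpa using ha) (neg_le_neg hta)

end LinearGronwall

theorem Prod.norm_mul_snd_mul_fst_le (a b x y : ℝ) :
    ‖(a * y, b * x)‖ ≤ (|a| + |b|) * ‖(x, y)‖ := by
  simp only [Prod.norm_def, Real.norm_eq_abs, abs_mul]
  refine max_le ?_ ?_
  · gcongr
    · exact le_add_of_nonneg_right (abs_nonneg b)
    · exact le_max_right _ _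
  · gcongr
    · exact le_add_of_nonneg_left (abs_nonneg a)
    · exact le_max_left _ _

namespace SphericalPendulum

variable {V : Type*} [NormedAddCommGroup V] [InnerProductSpace ℝ V] {γ u : ℝ → V}

noncomputable def constraint (γ : ℝ → V) (t : ℝ) : ℝ × ℝ :=
  (‖γ t‖ ^ 2 - 1, ⟪γ t, deriv γ t⟫)

theorem hasDerivAt_constraint (hγ : Differentiable ℝ γ) (hγ' : Differentiable ℝ (deriv γ))
    (hode : ∀ t, deriv (deriv γ) t = -‖deriv γ t‖ ^ 2 • γ t + u t)
    (horth : ∀ t, ⟪u t, γ t⟫ = 0) (t : ℝ) :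
    HasDerivAt (constraint γ)
      (2 * (constraint γ t).2, -‖deriv γ t‖ ^ 2 * (constraint γ t).1) t := by
  have hnorm : HasDerivAt (fun s => ‖γ s‖ ^ 2 - 1) (2 * ⟪γ t, deriv γ t⟫) t := by
    simpa using ((hγ t).hasDerivAt.norm_sq).sub_const 1
  have hinner := (hγ t).hasDerivAt.inner ℝ (hγ' t).hasDerivAt
  refine hnorm.prodMk (hinner.congr_deriv ?_)
  rw [hode, inner_add_right, inner_smul_right, real_inner_comm (u t), horth,
    real_inner_self_eq_norm_sq, real_inner_self_eq_norm_sq, constraint]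
  ring

theorem norm_eq_one (hγ : Differentiable ℝ γ) (hγ' : Differentiable ℝ (deriv γ))
    (hode : ∀ t, deriv (deriv γ) t = -‖deriv γ t‖ ^ 2 • γ t + u t)
    (horth : ∀ t, ⟪u t, γ t⟫ = 0) (h0 : ‖γ 0‖ = 1) (h0' : ⟪γ 0, deriv γ 0⟫ = 0) (t : ℝ) :
    ‖γ t‖ = 1 := by
  have hzero : constraint γ t = 0 :=
    eq_zero_of_norm_deriv_le_mul_norm (by have := hγ'.continuous; fun_prop)
      (hasDerivAt_constraint hγ hγ' hode horth) (fun s => Prod.norm_mul_snd_mul_fst_le _ _ _ _)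
      (a := 0) (by simp [constraint, h0, h0']) t
  have hsq : ‖γ t‖ ^ 2 = 1 := sub_eq_zero.mp (congrArg Prod.fst hzero)
  exact (pow_eq_one_iff_of_nonneg (norm_nonneg _) two_ne_zero).mp hsq

end SphericalPendulum

theorem spherical_pendulum_stays_on_sphere_general (γ u : ℝ → EuclideanSpace ℝ (Fin 3))
    (hγ : ContDiff ℝ 2 γ)
    (hode : ∀ t, deriv (deriv γ) t = -‖deriv γ t‖ ^ 2 • γ t + u t)
    (horth : ∀ t, ⟪u t, γ t⟫ = 0)
    (h0 : ‖γ 0‖ = 1) (h0' : ⟪γ 0, deriv γ 0⟫ = 0) :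
    ∀ t, ‖γ t‖ = 1 :=
  SphericalPendulum.norm_eq_one (hγ.differentiable (by norm_num))
    ((hγ.deriv' (n := 1)).differentiable one_ne_zero) hode horth h0 h0'

/-- The controlled spherical pendulum stays on the sphere: if a C² curve γ in ℝ³
satisfies γ̈(t) = -‖γ̇(t)‖² γ(t) + u(t) with a continuous force u(t) orthogonal to
γ(t) for all t, and the initial state lies on the tangent bundle of S²
(‖γ(0)‖ = 1, ⟨γ(0), γ̇(0)⟩ = 0), then ‖γ(t)‖ = 1 for all t. -/
theorem spherical_pendulum_stays_on_sphere (γ u : ℝ → EuclideanSpace ℝ (Fin 3))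
    (hγ : ContDiff ℝ 2 γ) (hu : Continuous u)
    (hode : ∀ t, deriv (deriv γ) t = -‖deriv γ t‖ ^ 2 • γ t + u t)
    (horth : ∀ t, ⟪u t, γ t⟫ = 0)
    (h0 : ‖γ 0‖ = 1) (h0' : ⟪γ 0, deriv γ 0⟫ = 0) :
    ∀ t, ‖γ t‖ = 1 :=
  spherical_pendulum_stays_on_sphere_general γ u hγ hode horth h0 h0'
end

section
/- Define h : ℝ³ → ℝ² by h(x,y,z) = ( x² + y² + z² - 2xyz - 1, 4x²y - 2xz - y ). For every t ∈ ℝ, the point c(t) = (cos t, sin 2t, sin 3t) satisfies h(c(t)) = (0,0); that is, cos²t + sin²2t + sin²3t - 2 cos t sin 2t sin 3t = 1 and 4 cos²t sin 2t - 2 cos t sin 3t - sin 2t = 0 for all t. Hence the three-dimensional Lissajous curve t ↦ (cos t, sin 2t, sin 3t) is contained in L = h⁻¹{(0,0)}. -/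
open Real

/-- The defining map of the Lissajous curve L ⊂ ℝ³:
h(x,y,z) = (x² + y² + z² - 2xyz - 1, 4x²y - 2xz - y). -/
def lissMap (p : ℝ × ℝ × ℝ) : ℝ × ℝ :=
  (p.1 ^ 2 + p.2.1 ^ 2 + p.2.2 ^ 2 - 2 * p.1 * p.2.1 * p.2.2 - 1,
   4 * p.1 ^ 2 * p.2.1 - 2 * p.1 * p.2.2 - p.2.1)

/-- The 3D Lissajous curve t ↦ (cos t, sin 2t, sin 3t) lies in L = h⁻¹{(0,0)}:
cos²t + sin²2t + sin²3t - 2 cos t sin 2t sin 3t = 1 and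
4 cos²t sin 2t - 2 cos t sin 3t - sin 2t = 0 for all t. -/
theorem lissajous_curve_mem (t : ℝ) :
    lissMap (cos t, sin (2 * t), sin (3 * t)) = (0, 0) ∧
    cos t ^ 2 + sin (2 * t) ^ 2 + sin (3 * t) ^ 2
        - 2 * cos t * sin (2 * t) * sin (3 * t) = 1 ∧
    4 * cos t ^ 2 * sin (2 * t) - 2 * cos t * sin (3 * t) - sin (2 * t) = 0 := by
  have h2 := Real.sin_two_mul t
  have h3 := Real.sin_three_mul t
  have hp := Real.sin_sq_add_cos_sq t
  refine ⟨?_, ?_, ?_⟩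
  · simp only [lissMap, Prod.mk.injEq]
    constructor
    · rw [h2, h3]
      linear_combination (16 * sin t ^ 4 - 8 * sin t ^ 2 + 1) * hp
    · rw [h2, h3]
      linear_combination 8 * sin t * cos t * hp
  · rw [h2, h3]
    linear_combination (16 * sin t ^ 4 - 8 * sin t ^ 2 + 1) * hp
  · rw [h2, h3]
    linear_combination 8 * sin t * cos t * hp
end
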